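/- Let C_n be the cycle on n ≥ 3 vertices and let X_{C_n} be the number of vertices with nonzero in-degree after a random orientation of the edges of C_n. Then H(X_{C_n}) = H(Bin(n,e)), where Bin(n,e) is a Binomial(n, 1/2) random variable conditioned to be even. -/

import Mathlib

open Finset

/-- Shannon entropy (base 2) of a random variable `X` defined on a finite sample space
with probability mass function `p`:  `H(X) = -∑_s P[X = s] log₂ P[X = s]`. -/
noncomputable def shannonEntropy {Ω S : Type*} [Fintype Ω] [DecidableEq S]
    (p : Ω → ℝ) (X : Ω → S) : ℝ :=
  -∑ s ∈ Finset.univ.image X,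
      (∑ ω ∈ Finset.univ.filter (fun ω => X ω = s), p ω) *
        Real.logb 2 (∑ ω ∈ Finset.univ.filter (fun ω => X ω = s), p ω)

/-- Shannon entropy (base 2) of `Bin(n, e)`, a `Binomial(n, 1/2)` random variable
conditioned to be even: it takes each even value `k ∈ {0, …, n}` with probability
`(n.choose k) / 2 ^ (n-1)` and each odd value with probability `0`. -/
noncomputable def binEvenEntropy (n : ℕ) : ℝ :=
  -∑ k ∈ Finset.range (n + 1),
      (if Even k then (n.choose k : ℝ) / 2 ^ (n - 1) else 0) *
        Real.logb 2 (if Even k then (n.choose k : ℝ) / 2 ^ (n - 1) else 0)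


/-!
Encode an orientation by `b : ZMod n → Bool`, where `b i` records whether the edge `{i, i+1}`
points to `i + 1`. The vertex `i + 1` has in-degree zero exactly when `b i = false` and
`b (i + 1) = true`, so `X = n - A` with `A` the number of cyclic ascents of `b`. Ascents and
descents alternate around the cycle, so `b` changes value at `2A` positions. The word `b` is
determined by `b 0` and its set of changes, so at most `2 * n.choose k` words have `k`
changes when `k` is even and none when `k` is odd. These bounds already add up to `2 ^ n`, so
they are attained: `2A` has the law of `Bin(n, e)`. Entropy depends only on the partition of
the sample space by a random variable, and `X` and `2A` are injective functions of `A`.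
-/

section Entropy

variable {Ω Ω' S S' : Type*} [Fintype Ω] [DecidableEq S]

theorem shannonEntropy_eq_of_image_subset (p : Ω → ℝ) (X : Ω → S) {t : Finset S}
    (ht : univ.image X ⊆ t) :
    shannonEntropy p X = -∑ s ∈ t, (∑ ω with X ω = s, p ω) *
      Real.logb 2 (∑ ω with X ω = s, p ω) := by
  rw [shannonEntropy, sum_subset ht]
  intro s _ hs
  have : ({ω | X ω = s} : Finset Ω) = ∅ :=
    filter_eq_empty_iff.2 fun ω _ hω => hs (mem_image.2 ⟨ω, mem_univ ω, hω⟩)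
  simp [this]

theorem shannonEntropy_comp_of_injOn [DecidableEq S'] (p : Ω → ℝ) (X : Ω → S) {f : S → S'}
    (hf : Set.InjOn f (Set.range X)) :
    shannonEntropy p (f ∘ X) = shannonEntropy p X := by
  have hf' : Set.InjOn f (univ.image X : Finset S) := by simpa using hf
  rw [shannonEntropy, shannonEntropy, ← image_image, sum_image hf']
  refine congrArg _ (sum_congr rfl fun s hs => ?_)
  obtain ⟨ω₀, -, rfl⟩ := mem_image.1 hs
  have : univ.filter (fun ω => f (X ω) = f (X ω₀)) = univ.filter (fun ω => X ω = X ω₀) :=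
    filter_congr fun ω _ => hf.eq_iff ⟨ω, rfl⟩ ⟨ω₀, rfl⟩
  simp only [Function.comp_apply, this]

theorem shannonEntropy_comp_equiv [Fintype Ω'] (e : Ω ≃ Ω') (p : Ω' → ℝ) (X : Ω' → S) :
    shannonEntropy (p ∘ e) (X ∘ e) = shannonEntropy p X := by
  have hfiber (s : S) : ∑ ω with X (e ω) = s, p (e ω) = ∑ ω' with X ω' = s, p ω' :=
    sum_equiv e (by simp) (fun _ _ => rfl)
  classical
  rw [shannonEntropy, shannonEntropy, ← image_image, image_univ_equiv]
  simp only [Function.comp_apply, hfiber]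

end Entropy

theorem Nat.sum_range_choose_ite_even {n : ℕ} (hn : n ≠ 0) :
    ∑ k ∈ range (n + 1), (if Even k then 2 * n.choose k else 0) = 2 ^ n := by
  have h (k : ℕ) : ((if Even k then 2 * n.choose k else 0 : ℕ) : ℤ) =
      n.choose k + (-1) ^ k * n.choose k := by
    rcases k.even_or_odd with hk | hk
    · rw [if_pos hk, hk.neg_one_pow]; push_cast; ring
    · rw [if_neg (Nat.not_even_iff_odd.2 hk), hk.neg_one_pow]; push_cast; ring
  have hz : ∑ k ∈ range (n + 1), ((if Even k then 2 * n.choose k else 0 : ℕ) : ℤ) = 2 ^ n := by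
    simp only [h, sum_add_distrib, Int.alternating_sum_range_choose_of_ne hn, add_zero]
    exact_mod_cast n.sum_range_choose
  exact_mod_cast hz

section CyclicSequence

variable {n : ℕ} [NeZero n]

def cyclicAscents (b : ZMod n → Bool) : Finset (ZMod n) := {i | b i = false ∧ b (i + 1) = true}

def cyclicDescents (b : ZMod n → Bool) : Finset (ZMod n) := {i | b i = true ∧ b (i + 1) = false}

def cyclicChanges (b : ZMod n → Bool) : Finset (ZMod n) := {i | b i ≠ b (i + 1)}

theorem card_cyclicAscents_eq_card_cyclicDescents (b : ZMod n → Bool) :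
    #(cyclicAscents b) = #(cyclicDescents b) := by
  have hshift : ∑ i : ZMod n, ((b (i + 1)).toNat : ℤ) = ∑ i : ZMod n, ((b i).toNat : ℤ) :=
    Fintype.sum_equiv (Equiv.addRight 1) _ _ fun _ => rfl
  have hdiff : ((#(cyclicAscents b) : ℕ) : ℤ) - #(cyclicDescents b) =
      ∑ i : ZMod n, (((b (i + 1)).toNat : ℤ) - (b i).toNat) := by
    simp only [cyclicAscents, cyclicDescents, card_filter, Nat.cast_sum, ← sum_sub_distrib]
    refine sum_congr rfl fun i _ => ?_
    cases b i <;> cases b (i + 1) <;> rfl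
  rw [sum_sub_distrib, hshift, sub_self] at hdiff
  omega

theorem card_cyclicChanges (b : ZMod n → Bool) :
    #(cyclicChanges b) = 2 * #(cyclicAscents b) := by
  have hsplit : cyclicChanges b = cyclicAscents b ∪ cyclicDescents b := by
    ext i
    simp only [cyclicChanges, cyclicAscents, cyclicDescents, mem_union, mem_filter, mem_univ,
      true_and]
    cases b i <;> cases b (i + 1) <;> decide
  have hdisj : Disjoint (cyclicAscents b) (cyclicDescents b) := by
    simp +contextual [cyclicAscents, cyclicDescents, disjoint_filter]
  rw [hsplit, card_union_of_disjoint hdisj, ← card_cyclicAscents_eq_card_cyclicDescents, two_mul]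

theorem eq_of_apply_zero_eq_of_cyclicChanges_eq {b b' : ZMod n → Bool} (h₀ : b 0 = b' 0)
    (h : cyclicChanges b = cyclicChanges b') : b = b' := by
  funext i
  rw [← ZMod.natCast_zmod_val i]
  induction i.val with
  | zero => simpa using h₀
  | succ k ih =>
    have hk := congrArg ((k : ZMod n) ∈ ·) h
    simp only [cyclicChanges, mem_filter, mem_univ, true_and, ih, eq_iff_iff] at hk
    push_cast
    revert hk
    cases b ((k : ZMod n) + 1) <;> cases b' ((k : ZMod n) + 1) <;> simp

theorem card_filter_card_cyclicChanges_le (k : ℕ) :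
    #{b : ZMod n → Bool | #(cyclicChanges b) = k} ≤ if Even k then 2 * n.choose k else 0 := by
  split_ifs with hk
  · calc #{b : ZMod n → Bool | #(cyclicChanges b) = k}
        ≤ #((univ : Finset Bool) ×ˢ powersetCard k (univ : Finset (ZMod n))) := by
          refine card_le_card_of_injOn (fun b => (b 0, cyclicChanges b)) ?_ ?_
          · intro b hb
            simp_all
          · intro b _ b' _ h
            exact eq_of_apply_zero_eq_of_cyclicChanges_eq (congrArg Prod.fst h)
              (congrArg Prod.snd h)
      _ = 2 * n.choose k := by simp
  · refine (card_eq_zero.2 (filter_eq_empty_iff.2 fun b _ hb => hk ?_)).le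
    rw [← hb, card_cyclicChanges]
    exact even_two_mul _

theorem card_filter_card_cyclicChanges (k : ℕ) :
    #{b : ZMod n → Bool | #(cyclicChanges b) = k} = if Even k then 2 * n.choose k else 0 := by
  by_cases hkn : k ≤ n
  · have hmaps : ∀ b ∈ (univ : Finset (ZMod n → Bool)), #(cyclicChanges b) ∈ range (n + 1) :=
      fun b _ => mem_range_succ_iff.2 ((card_le_univ _).trans (ZMod.card n).le)
    have htotal : ∑ k ∈ range (n + 1), #{b : ZMod n → Bool | #(cyclicChanges b) = k} =
        ∑ k ∈ range (n + 1), (if Even k then 2 * n.choose k else 0) := by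
      rw [← card_eq_sum_card_fiberwise hmaps, Nat.sum_range_choose_ite_even (NeZero.ne n)]
      simp
    exact (sum_eq_sum_iff_of_le fun k _ => card_filter_card_cyclicChanges_le k).1 htotal k
      (mem_range_succ_iff.2 hkn)
  · have := card_filter_card_cyclicChanges_le (n := n) k
    rw [Nat.choose_eq_zero_of_lt (not_le.1 hkn), mul_zero, ite_self] at this ⊢
    exact Nat.le_zero.1 this

theorem sum_filter_card_cyclicChanges_uniform (k : ℕ) :
    ∑ b : ZMod n → Bool with #(cyclicChanges b) = k, (1 : ℝ) / 2 ^ n =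
      if Even k then (n.choose k : ℝ) / 2 ^ (n - 1) else 0 := by
  have h2n : (2 : ℝ) ^ n = 2 * 2 ^ (n - 1) := by
    rw [← pow_succ', Nat.sub_add_cancel (Nat.one_le_iff_ne_zero.2 (NeZero.ne n))]
  rw [sum_const, card_filter_card_cyclicChanges, nsmul_eq_mul]
  split_ifs
  · rw [h2n]; push_cast; field_simp
  · simp

theorem shannonEntropy_card_cyclicChanges_uniform :
    shannonEntropy (fun _ : ZMod n → Bool => (1 : ℝ) / 2 ^ n) (fun b => #(cyclicChanges b)) =
      binEvenEntropy n := by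
  have himage : univ.image (fun b : ZMod n → Bool => #(cyclicChanges b)) ⊆ range (n + 1) :=
    fun k hk => by
      obtain ⟨b, -, rfl⟩ := mem_image.1 hk
      exact mem_range_succ_iff.2 ((card_le_univ _).trans_eq (ZMod.card n))
  rw [shannonEntropy_eq_of_image_subset _ _ himage, binEvenEntropy]
  simp only [sum_filter_card_cyclicChanges_uniform]

end CyclicSequence

section Orientation

variable {n : ℕ}

def orientationOfBool (b : ZMod n → Bool) (i : ZMod n) : ZMod n := if b i then i + 1 else i

theorem exists_orientationOfBool_eq_add_one_iff (b : ZMod n → Bool) (i : ZMod n) :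
    (∃ j, orientationOfBool b j = i + 1) ↔ b i = true ∨ b (i + 1) = false := by
  constructor
  · rintro ⟨j, hj⟩
    unfold orientationOfBool at hj
    split_ifs at hj with hb
    · exact .inl (add_right_cancel hj ▸ hb)
    · exact .inr (hj ▸ Bool.of_not_eq_true hb)
  · rintro (hb | hb)
    · exact ⟨i, by simp [orientationOfBool, hb]⟩
    · exact ⟨i + 1, by simp [orientationOfBool, hb]⟩

theorem card_range_orientationOfBool_add_card_cyclicAscents [NeZero n] (b : ZMod n → Bool) :
    #{v | ∃ i, orientationOfBool b i = v} + #(cyclicAscents b) = n := by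
  have hsources : #{v | ¬∃ i, orientationOfBool b i = v} = #(cyclicAscents b) := by
    refine (card_equiv (Equiv.subRight 1) fun v => ?_)
    have := exists_orientationOfBool_eq_add_one_iff b (v - 1)
    simp only [sub_add_cancel] at this
    simp only [cyclicAscents, mem_filter, mem_univ, true_and, Equiv.subRight_apply,
      sub_add_cancel, this, not_or, Bool.not_eq_true, Bool.not_eq_false]
  rw [← hsources, card_filter_add_card_filter_not, card_univ, ZMod.card]

def orientationEquivBool (hn : 2 ≤ n) :
    {g : ZMod n → ZMod n // ∀ i, g i = i ∨ g i = i + 1} ≃ (ZMod n → Bool) :=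
  haveI : Fact (1 < n) := ⟨hn⟩
  have hne (i : ZMod n) : i ≠ i + 1 := left_ne_add.2 one_ne_zero
  { toFun g i := decide (g.1 i = i + 1)
    invFun b := ⟨orientationOfBool b, fun i => by
      unfold orientationOfBool; split_ifs <;> simp⟩
    left_inv g := by
      ext i
      rcases g.2 i with h | h <;> simp [orientationOfBool, h, hne]
    right_inv b := by
      funext i
      cases hb : b i <;> simp [orientationOfBool, hb, hne] }

theorem orientationOfBool_orientationEquivBool (hn : 2 ≤ n)
    (g : {g : ZMod n → ZMod n // ∀ i, g i = i ∨ g i = i + 1}) :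
    orientationOfBool (orientationEquivBool hn g) = g.1 :=
  congrArg Subtype.val ((orientationEquivBool hn).symm_apply_apply g)

end Orientation

theorem cycle_entropy_eq_binEven (n : ℕ) [NeZero n] (hn : 3 ≤ n) :
    shannonEntropy
        (fun _ : {g : ZMod n → ZMod n // ∀ i, g i = i ∨ g i = i + 1} =>
          (1 : ℝ) / 2 ^ n)
        (fun g => (Finset.univ.filter fun v : ZMod n => ∃ i, g.1 i = v).card) =
      binEvenEntropy n := by
  set e := orientationEquivBool (n := n) (by omega)
  set ascents : (ZMod n → Bool) → ℕ := fun b => #(cyclicAscents b)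
  have hsources (g) : #{v | ∃ i, g.1 i = v} = n - ascents (e g) := by
    show _ = n - #(cyclicAscents (e g))
    have := card_range_orientationOfBool_add_card_cyclicAscents (e g)
    rw [orientationOfBool_orientationEquivBool] at this
    omega
  have hinj : Set.InjOn (n - ·) (Set.range (ascents ∘ e)) := by
    rintro _ ⟨g, rfl⟩ _ ⟨g', rfl⟩ h
    have hle (b) : ascents b ≤ n := (card_le_univ _).trans_eq (ZMod.card n)
    have := hle (e g)
    have := hle (e g')
    simp only [Function.comp_apply] at h ⊢
    omega
  calc _ = shannonEntropy (fun _ => (1 : ℝ) / 2 ^ n) ((n - ·) ∘ ascents ∘ e) := by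
        simp only [hsources]; rfl
    _ = shannonEntropy ((fun _ => (1 : ℝ) / 2 ^ n) ∘ e) (ascents ∘ e) :=
        shannonEntropy_comp_of_injOn _ _ hinj
    _ = shannonEntropy (fun _ => (1 : ℝ) / 2 ^ n) ascents := shannonEntropy_comp_equiv e _ _
    _ = shannonEntropy (fun _ => (1 : ℝ) / 2 ^ n) ((2 * ·) ∘ ascents) :=
        (shannonEntropy_comp_of_injOn _ _ (mul_right_injective₀ two_ne_zero).injOn).symm
    _ = binEvenEntropy n := by
        simp only [Function.comp_def, ascents, ← card_cyclicChanges]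
        exact shannonEntropy_card_cyclicChanges_uniform
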